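/- arXiv:math/0512444 — 4 statements merged into one kernel-verified Lean document; each statement's English description precedes it below -/
import Mathlib

section
/- Assume b_p, n_p > 0 for p ∈ {1,…,P}, and assume the family k ↦ ∏_{p=1}^P (1 + b_p·K_p(k))^(−n_p) is summable over k ∈ ℕ^M. Then ∫_{(0,∞)^P} [∏_{m=1}^M e^(−y_m·(X_m·β)) / (1 + e^(−(X_m·β)))] · ∏_{p=1}^P G(β_p; b_p, n_p) dβ = Σ_{k ∈ ℕ^M} (−1)^{|k|} · ∏_{p=1}^P (1 + b_p·K_p(k))^(−n_p). -/
open MeasureTheory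

/-- The Gamma density with scale `b` and shape `n`:
`G(z; b, n) = (1/(b·Γ(n)))·(z/b)^(n−1)·e^(−z/b)` for `z > 0`, and `0` for `z ≤ 0`. -/
noncomputable def gammaDensity (b n z : ℝ) : ℝ :=
  if 0 < z then 1 / (b * Real.Gamma n) * (z / b) ^ (n - 1) * Real.exp (-(z / b)) else 0

/-- `K_p(k) = Σ_m (y_m + k_m)·x_{m,p}` -/
noncomputable def Kcoef {M P : ℕ} (x : Fin M → Fin P → ℝ) (y : Fin M → ℝ)
    (k : Fin M → ℕ) (p : Fin P) : ℝ :=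
  ∑ m, (y m + k m) * x m p

/-!
Expand each logistic factor as a geometric series,
`e^{-y u} / (1 + e^{-u}) = ∑ₖ (-1)^k e^{-(y + k) u}` for `u = X_m·β > 0`. Multiplying the `M`
series gives a series over `k ∈ ℕ^M` whose terms factor over the coordinates `β_p`, with
exponents `K_p(k)`; each one-dimensional factor then integrates against the Gamma density to its
Laplace transform `(1 + b_p K_p(k))^{-n_p}`. Since all these integrands are nonnegative up to the
sign `(-1)^{|k|}`, the summability hypothesis is exactly absolute integrability of the series,
which justifies exchanging sum and integral.
-/

open Set Finset Real

section GammaDensity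

variable {b n : ℝ}

lemma gammaDensity_nonneg (hb : 0 < b) (hn : 0 < n) (z : ℝ) : 0 ≤ gammaDensity b n z := by
  unfold gammaDensity
  split_ifs <;> positivity

lemma exp_neg_mul_mul_gammaDensity (hb : 0 < b) (K : ℝ) {z : ℝ} (hz : 0 < z) :
    exp (-(K * z)) * gammaDensity b n z
      = 1 / (b * Gamma n) * (1 / b) ^ (n - 1) * (z ^ (n - 1) * exp (-((K + 1 / b) * z))) := by
  rw [gammaDensity, if_pos hz, div_eq_mul_one_div z b, mul_rpow hz.le (by positivity),
    show -((K + 1 / b) * z) = -(K * z) + -(z * (1 / b)) by ring, exp_add]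
  ring

variable {K : ℝ}

lemma add_one_div_pos_of_one_add_mul_pos (hb : 0 < b) (hK : 0 < 1 + b * K) : 0 < K + 1 / b := by
  rw [← mul_pos_iff_of_pos_left hb, mul_add, mul_one_div_cancel hb.ne', add_comm]
  exact hK

lemma integrableOn_exp_neg_mul_mul_gammaDensity (hb : 0 < b) (hn : 0 < n)
    (hK : 0 < 1 + b * K) :
    IntegrableOn (fun z => exp (-(K * z)) * gammaDensity b n z) (Ioi 0) := by
  have h := (integrableOn_rpow_mul_exp_neg_mul_rpow (s := n - 1) (by linarith) zero_lt_one
    (add_one_div_pos_of_one_add_mul_pos hb hK)).const_mul (1 / (b * Gamma n) * (1 / b) ^ (n - 1))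
  refine IntegrableOn.congr_fun h (fun z hz => ?_) measurableSet_Ioi
  rw [exp_neg_mul_mul_gammaDensity hb K hz, rpow_one, neg_mul]

lemma integral_exp_neg_mul_mul_gammaDensity (hb : 0 < b) (hn : 0 < n) (hK : 0 < 1 + b * K) :
    ∫ z in Ioi 0, exp (-(K * z)) * gammaDensity b n z = (1 + b * K) ^ (-n) := by
  have hr := add_one_div_pos_of_one_add_mul_pos hb hK
  have hΓ := Gamma_pos_of_pos hn
  rw [setIntegral_congr_fun measurableSet_Ioi fun z hz => exp_neg_mul_mul_gammaDensity hb K hz,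
    integral_const_mul, integral_rpow_mul_exp_neg_mul_Ioi hn hr]
  have h_pow : (1 / b) ^ (n - 1) = (1 / b) ^ n * b := by
    rw [rpow_sub (by positivity), rpow_one]; field_simp
  have h_base : (1 / b) ^ n * (1 / (K + 1 / b)) ^ n = (1 + b * K) ^ (-n) := by
    rw [← mul_rpow (by positivity) (by positivity),
      show 1 / b * (1 / (K + 1 / b)) = (1 + b * K)⁻¹ by
        rw [one_div_mul_one_div, mul_add, mul_one_div_cancel hb.ne', add_comm, one_div],
      inv_rpow hK.le, ← rpow_neg hK.le]
  rw [h_pow, ← h_base]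
  field_simp

end GammaDensity

section Orthant

variable {ι : Type*} [Fintype ι] {b n K : ι → ℝ}

lemma integrableOn_pi_Ioi_prod_exp_neg_mul_mul_gammaDensity (hb : ∀ i, 0 < b i)
    (hn : ∀ i, 0 < n i) (hK : ∀ i, 0 < 1 + b i * K i) :
    IntegrableOn
      (fun β : ι → ℝ => ∏ i, exp (-(K i * β i)) * gammaDensity (b i) (n i) (β i))
      (univ.pi fun _ => Ioi 0) := by
  rw [IntegrableOn, volume_pi, Measure.restrict_pi_pi]
  exact Integrable.fintype_prod fun i =>
    integrableOn_exp_neg_mul_mul_gammaDensity (hb i) (hn i) (hK i)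

lemma integral_pi_Ioi_prod_exp_neg_mul_mul_gammaDensity (hb : ∀ i, 0 < b i)
    (hn : ∀ i, 0 < n i) (hK : ∀ i, 0 < 1 + b i * K i) :
    ∫ β in univ.pi (fun _ => Ioi (0 : ℝ)),
        ∏ i, exp (-(K i * β i)) * gammaDensity (b i) (n i) (β i)
      = ∏ i, (1 + b i * K i) ^ (-n i) := by
  rw [volume_pi, Measure.restrict_pi_pi,
    integral_fintype_prod_eq_prod fun i z => exp (-(K i * z)) * gammaDensity (b i) (n i) z]
  exact prod_congr rfl fun i _ => integral_exp_neg_mul_mul_gammaDensity (hb i) (hn i) (hK i)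

end Orthant

section ProductOfSeries

variable {R κ : Type*} [NormedCommRing R]

lemma summable_norm_prod_pi :
    ∀ {M : ℕ} {f : Fin M → κ → R}, (∀ i, Summable fun j => ‖f i j‖) →
      Summable fun k : Fin M → κ => ‖∏ i, f i (k i)‖
  | 0, _, _ => Summable.of_finite
  | M + 1, f, hf => by
    rw [← (Fin.consEquiv fun _ => κ).summable_iff]
    refine ((hf 0).mul_norm (summable_norm_prod_pi fun i => hf i.succ)).congr fun z => ?_
    simp [Fin.consEquiv, Fin.prod_univ_succ]

lemma tsum_prod_pi [CompleteSpace R] :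
    ∀ {M : ℕ} {f : Fin M → κ → R}, (∀ i, Summable fun j => ‖f i j‖) →
      ∏ i, ∑' j, f i j = ∑' k : Fin M → κ, ∏ i, f i (k i)
  | 0, _, _ => by simp
  | M + 1, f, hf => by
    rw [Fin.prod_univ_succ, tsum_prod_pi fun i => hf i.succ,
      tsum_mul_tsum_of_summable_norm (hf 0) (summable_norm_prod_pi fun i => hf i.succ),
      ← (Fin.consEquiv fun _ => κ).tsum_eq]
    simp [Fin.consEquiv, Fin.prod_univ_succ]

end ProductOfSeries

lemma neg_one_pow_mul_exp_neg_add_mul (a u : ℝ) (k : ℕ) :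
    (-1) ^ k * exp (-((a + k) * u)) = exp (-(a * u)) * (-exp (-u)) ^ k := by
  rw [neg_pow, show -((a + k) * u) = -(a * u) + k * -u by ring, exp_add, exp_nat_mul]
  ring

lemma hasSum_neg_one_pow_mul_exp_neg_add_mul (a : ℝ) {u : ℝ} (hu : 0 < u) :
    HasSum (fun k : ℕ => (-1) ^ k * exp (-((a + k) * u))) (exp (-(a * u)) / (1 + exp (-u))) := by
  have hlt : ‖-exp (-u)‖ < 1 := by
    rw [norm_neg, norm_of_nonneg (exp_nonneg _), exp_lt_one_iff]
    linarith
  simpa only [neg_one_pow_mul_exp_neg_add_mul, sub_neg_eq_add, div_eq_mul_inv]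
    using (hasSum_geometric_of_norm_lt_one hlt).mul_left (exp (-(a * u)))

lemma summable_norm_neg_one_pow_mul_exp_neg_add_mul (a : ℝ) {u : ℝ} (hu : 0 < u) :
    Summable fun k : ℕ => ‖(-1) ^ k * exp (-((a + k) * u))‖ := by
  have hlt : exp (-u) < 1 := exp_lt_one_iff.2 (by linarith)
  refine ((summable_geometric_of_lt_one (exp_nonneg _) hlt).mul_left (exp (-(a * u)))).congr
    fun k => ?_
  rw [neg_one_pow_mul_exp_neg_add_mul, norm_mul, norm_pow, norm_neg,
    norm_of_nonneg (exp_nonneg _), norm_of_nonneg (exp_nonneg _)]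

section Logit

variable {M P : ℕ} (x : Fin M → Fin P → ℝ) (y : Fin M → ℝ)

lemma prod_exp_neg_add_mul_eq_prod_exp_neg_Kcoef_mul (k : Fin M → ℕ) (β : Fin P → ℝ) :
    ∏ m, exp (-((y m + k m) * ∑ p, x m p * β p)) = ∏ p, exp (-(Kcoef x y k p * β p)) := by
  simp only [← exp_sum, sum_neg_distrib, Kcoef, mul_sum, sum_mul]
  rw [sum_comm]
  simp only [mul_assoc]

lemma prod_logit_eq_tsum (hx : ∀ m p, 0 ≤ x m p) (hx' : ∀ m, ∃ p, 0 < x m p)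
    {β : Fin P → ℝ} (hβ : ∀ p, 0 < β p) :
    ∏ m, exp (-(y m * ∑ p, x m p * β p)) / (1 + exp (-(∑ p, x m p * β p)))
      = ∑' k : Fin M → ℕ, (-1) ^ (∑ m, k m) * ∏ p, exp (-(Kcoef x y k p * β p)) := by
  have hu : ∀ m, 0 < ∑ p, x m p * β p := fun m => by
    obtain ⟨q, hq⟩ := hx' m
    exact sum_pos' (fun p _ => mul_nonneg (hx m p) (hβ p).le)
      ⟨q, mem_univ q, mul_pos hq (hβ q)⟩
  simp only [← (hasSum_neg_one_pow_mul_exp_neg_add_mul (y _) (hu _)).tsum_eq,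
    tsum_prod_pi fun m => summable_norm_neg_one_pow_mul_exp_neg_add_mul (y m) (hu m),
    prod_mul_distrib, prod_pow_eq_pow_sum, prod_exp_neg_add_mul_eq_prod_exp_neg_Kcoef_mul]

end Logit

theorem integral_logit_gamma_eq_tsum_general (M P : ℕ)
    (x : Fin M → Fin P → ℝ) (hx : ∀ m p, 0 ≤ x m p) (hx' : ∀ m, ∃ p, 0 < x m p)
    (y : Fin M → ℝ) (hy : ∀ m, y m = 0 ∨ y m = 1)
    (b n : Fin P → ℝ) (hb : ∀ p, 0 < b p) (hn : ∀ p, 0 < n p)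
    (hsum : Summable fun k : Fin M → ℕ => ∏ p, (1 + b p * Kcoef x y k p) ^ (-(n p))) :
    ∫ β in Set.univ.pi (fun _ : Fin P => Set.Ioi (0 : ℝ)),
        (∏ m, Real.exp (-(y m * ∑ p, x m p * β p)) /
            (1 + Real.exp (-(∑ p, x m p * β p)))) *
          ∏ p, gammaDensity (b p) (n p) (β p)
      = ∑' k : Fin M → ℕ,
          (-1 : ℝ) ^ (∑ m, k m) * ∏ p, (1 + b p * Kcoef x y k p) ^ (-(n p)) := by
  have hK : ∀ k p, 0 < 1 + b p * Kcoef x y k p := fun k p => by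
    have : 0 ≤ Kcoef x y k p := sum_nonneg fun m _ =>
      mul_nonneg (add_nonneg (by rcases hy m with h | h <;> simp [h]) (k m).cast_nonneg) (hx m p)
    have := hb p
    positivity
  set S := univ.pi fun _ : Fin P => Ioi (0 : ℝ)
  set G := fun (k : Fin M → ℕ) (β : Fin P → ℝ) =>
    ∏ p, exp (-(Kcoef x y k p * β p)) * gammaDensity (b p) (n p) (β p)
  have hG_int : ∀ k, ∫ β in S, G k β = ∏ p, (1 + b p * Kcoef x y k p) ^ (-(n p)) := fun k =>
    integral_pi_Ioi_prod_exp_neg_mul_mul_gammaDensity hb hn (hK k)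
  have hG_nonneg : ∀ k β, 0 ≤ G k β := fun k β => prod_nonneg fun p _ =>
    mul_nonneg (exp_nonneg _) (gammaDensity_nonneg (hb p) (hn p) _)
  have hG_norm : ∀ k, ∫ β in S, ‖(-1) ^ (∑ m, k m) * G k β‖
      = ∏ p, (1 + b p * Kcoef x y k p) ^ (-(n p)) := fun k => by
    simp only [norm_mul, norm_pow, norm_neg, norm_one, one_pow, one_mul,
      norm_of_nonneg (hG_nonneg k _), hG_int]
  calc _ = ∫ β in S, ∑' k : Fin M → ℕ, (-1) ^ (∑ m, k m) * G k β := by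
        refine setIntegral_congr_fun (MeasurableSet.univ_pi fun _ => measurableSet_Ioi)
          fun β hβ => ?_
        rw [prod_logit_eq_tsum x y hx hx' (by simpa [S] using hβ), ← tsum_mul_right]
        simp only [G, mul_assoc, prod_mul_distrib]
    _ = ∑' k : Fin M → ℕ, ∫ β in S, (-1) ^ (∑ m, k m) * G k β := by
        refine (integral_tsum_of_summable_integral_norm (fun k =>
          (integrableOn_pi_Ioi_prod_exp_neg_mul_mul_gammaDensity hb hn (hK k)).const_mul _)
          ?_).symm
        exact (summable_congr hG_norm).mpr hsum
    _ = _ := tsum_congr fun k => by rw [integral_const_mul, hG_int]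

/-- Closed-form series expansion of the marginalized logit likelihood against a product of
independent Gamma priors (Theorem 1 of the paper, for one household). -/
theorem integral_logit_gamma_eq_tsum (M P : ℕ) (hM : 1 ≤ M) (hP : 1 ≤ P)
    (x : Fin M → Fin P → ℝ) (hx : ∀ m p, 0 ≤ x m p) (hx' : ∀ m, ∃ p, 0 < x m p)
    (y : Fin M → ℝ) (hy : ∀ m, y m = 0 ∨ y m = 1)
    (b n : Fin P → ℝ) (hb : ∀ p, 0 < b p) (hn : ∀ p, 0 < n p)
    (hsum : Summable fun k : Fin M → ℕ => ∏ p, (1 + b p * Kcoef x y k p) ^ (-(n p))) :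
    ∫ β in Set.univ.pi (fun _ : Fin P => Set.Ioi (0 : ℝ)),
        (∏ m, Real.exp (-(y m * ∑ p, x m p * β p)) /
            (1 + Real.exp (-(∑ p, x m p * β p)))) *
          ∏ p, gammaDensity (b p) (n p) (β p)
      = ∑' k : Fin M → ℕ,
          (-1 : ℝ) ^ (∑ m, k m) * ∏ p, (1 + b p * Kcoef x y k p) ^ (-(n p)) :=
  integral_logit_gamma_eq_tsum_general M P x hx hx' y hy b n hb hn hsum
end

section
/- For all reals λ_1, λ_2, λ_{12} > 0 and all reals t_1 < λ_1 and t_2 < λ_2, both of the following integrals are finite and ∫_0^∞ ∫_0^∞ e^(−λ_{12}·x_1·x_2 − (λ_1 − t_1)·x_1 − (λ_2 − t_2)·x_2) dx_1 dx_2 = (1/λ_{12}) · ∫_0^∞ e^(−u) / (u + (λ_1 − t_1)·(λ_2 − t_2)/λ_{12}) du. -/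
open MeasureTheory Real Set

private lemma exp_int (k : ℝ) (hk : 0 < k) :
    ∫ y in Ioi (0:ℝ), Real.exp (-(k * y)) = k⁻¹ := by
  have := integral_comp_mul_left_Ioi (fun u => Real.exp (-u)) 0 hk
  simp only [mul_zero, integral_exp_neg_Ioi, neg_zero, Real.exp_zero, smul_eq_mul,
    mul_one] at this
  exact this

private lemma exp_intgOn (k : ℝ) (hk : 0 < k) :
    IntegrableOn (fun x => Real.exp (-(k * x))) (Ioi (0:ℝ)) := by
  simpa [neg_mul] using exp_neg_integrableOn_Ioi 0 hk

/-- The (unnormalized) moment generating function of Arnold and Strauss's bivariate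
exponential distribution as a one-dimensional exponential-integral-type integral:
for `λ_1, λ_2, λ_{12} > 0` and `t_1 < λ_1`, `t_2 < λ_2`, both integrals are finite and
`∫_0^∞∫_0^∞ e^(−λ_{12} x_1 x_2 − (λ_1 − t_1) x_1 − (λ_2 − t_2) x_2) dx_1 dx_2
  = (1/λ_{12}) ∫_0^∞ e^(−u)/(u + (λ_1 − t_1)(λ_2 − t_2)/λ_{12}) du`. -/
theorem arnold_strauss_mgf_integral (l₁ l₂ l₁₂ t₁ t₂ : ℝ)
    (hl₁ : 0 < l₁) (hl₂ : 0 < l₂) (hl₁₂ : 0 < l₁₂) (ht₁ : t₁ < l₁) (ht₂ : t₂ < l₂) :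
    IntegrableOn
      (fun q : ℝ × ℝ =>
        Real.exp (-(l₁₂ * q.1 * q.2) - (l₁ - t₁) * q.1 - (l₂ - t₂) * q.2))
      (Set.Ioi 0 ×ˢ Set.Ioi 0) ∧
    IntegrableOn
      (fun u : ℝ => Real.exp (-u) / (u + (l₁ - t₁) * (l₂ - t₂) / l₁₂))
      (Set.Ioi 0) ∧
    ∫ q in (Set.Ioi (0:ℝ) ×ˢ Set.Ioi (0:ℝ)),
        Real.exp (-(l₁₂ * q.1 * q.2) - (l₁ - t₁) * q.1 - (l₂ - t₂) * q.2)
      = (1 / l₁₂) *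
          ∫ u in Set.Ioi (0:ℝ), Real.exp (-u) / (u + (l₁ - t₁) * (l₂ - t₂) / l₁₂) := by
  set a := l₁ - t₁ with ha_def
  set b := l₂ - t₂ with hb_def
  set c := l₁₂ with hc_def
  have ha : 0 < a := sub_pos.2 ht₁
  have hb : 0 < b := sub_pos.2 ht₂
  have hc : 0 < c := hl₁₂
  have hK : 0 < a * b / c := by positivity
  -- integrability of the 2D function
  have hprod : IntegrableOn
      (fun q : ℝ × ℝ => Real.exp (-(a * q.1)) * Real.exp (-(b * q.2)))
      (Ioi 0 ×ˢ Ioi 0) := by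
    rw [IntegrableOn, Measure.volume_eq_prod, ← Measure.prod_restrict]
    exact (exp_intgOn a ha).mul_prod (exp_intgOn b hb)
  have h1 : IntegrableOn
      (fun q : ℝ × ℝ => Real.exp (-(c * q.1 * q.2) - a * q.1 - b * q.2))
      (Ioi 0 ×ˢ Ioi 0) := by
    refine Integrable.mono hprod ?_ ?_
    · apply Continuous.aestronglyMeasurable
      fun_prop
    · rw [ae_restrict_iff' (measurableSet_Ioi.prod measurableSet_Ioi)]
      filter_upwards with q hq
      obtain ⟨hx, hy⟩ := hq
      simp only [norm_mul, Real.norm_eq_abs, Real.abs_exp, ← Real.exp_add]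
      apply Real.exp_le_exp.2
      have : 0 ≤ c * q.1 * q.2 := by
        have hx' : (0:ℝ) < q.1 := hx
        have hy' : (0:ℝ) < q.2 := hy
        positivity
      linarith
  -- integrability of the 1D function
  have h2 : IntegrableOn
      (fun u : ℝ => Real.exp (-u) / (u + a * b / c)) (Ioi 0) := by
    refine (((exp_intgOn 1 one_pos).const_mul (a * b / c)⁻¹)).mono ?_ ?_
    · exact ((Real.measurable_exp.comp measurable_neg).div
        (measurable_id.add_const _)).aestronglyMeasurable
    · rw [ae_restrict_iff' measurableSet_Ioi]
      filter_upwards with u hu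
      have hu' : (0:ℝ) < u := hu
      have hd : 0 < u + a * b / c := by linarith
      rw [Real.norm_eq_abs, Real.norm_eq_abs, abs_of_nonneg (by positivity),
        abs_of_nonneg (by positivity), one_mul]
      rw [div_le_iff₀ hd, mul_comm ((a*b/c)⁻¹) _, mul_assoc]
      have h1le : 1 ≤ (u + a * b / c) * (a * b / c)⁻¹ := by
        rw [← div_eq_mul_inv, le_div_iff₀ hK]; linarith
      exact le_mul_of_one_le_right (Real.exp_pos _).le (by rwa [mul_comm] at h1le)
  refine ⟨h1, h2, ?_⟩
  -- the equality
  have h1' : IntegrableOn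
      (fun q : ℝ × ℝ => Real.exp (-(c * q.1 * q.2) - a * q.1 - b * q.2))
      (Ioi 0 ×ˢ Ioi 0) ((volume : Measure ℝ).prod volume) := by
    rwa [IntegrableOn, ← Measure.volume_eq_prod]
  rw [Measure.volume_eq_prod, setIntegral_prod _ h1']
  have inner : ∀ x ∈ Ioi (0:ℝ),
      (∫ y in Ioi (0:ℝ), Real.exp (-(c * x * y) - a * x - b * y))
        = Real.exp (-(a * x)) * (c * x + b)⁻¹ := by
    intro x hx
    have hx' : (0:ℝ) < x := hx
    have hcb : 0 < c * x + b := by positivity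
    have : ∀ y : ℝ, Real.exp (-(c * x * y) - a * x - b * y)
        = Real.exp (-(a * x)) * Real.exp (-((c * x + b) * y)) := by
      intro y; rw [← Real.exp_add]; ring_nf
    simp only [this]
    rw [integral_const_mul, exp_int _ hcb]
  rw [setIntegral_congr_fun measurableSet_Ioi inner]
  -- substitution u = a * x
  have hsub := integral_comp_mul_left_Ioi
    (fun u => Real.exp (-u) * (a / (c * u + a * b))) 0 ha
  simp only [mul_zero, smul_eq_mul] at hsub
  have heq : ∀ x : ℝ, Real.exp (-(a * x)) * (c * x + b)⁻¹
      = Real.exp (-(a * x)) * (a / (c * (a * x) + a * b)) := by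
    intro x
    congr 1
    rw [show c * (a * x) + a * b = a * (c * x + b) by ring, ← one_div,
      ← mul_div_mul_left 1 (c * x + b) ha.ne', mul_one]
  simp only [heq]
  rw [hsub]
  rw [← integral_const_mul, ← integral_const_mul]
  apply setIntegral_congr_fun measurableSet_Ioi
  intro u hu
  have hu' : (0:ℝ) < u := hu
  have h3 : 0 < c * u + a * b := by positivity
  have h4 : 0 < u + a * b / c := by positivity
  field_simp
end

section
/- For all reals α_1, α_2, α_1', α_2' > 0, the quantity ρ = (α_1'·α_2' − α_1·α_2) / √((α_1'² + 2·α_1·α_2 + α_2²)·(α_2'² + 2·α_1·α_2 + α_1²)) satisfies −1/3 < ρ < 1. -/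
/-- The correlation coefficient of Freund's bivariate exponential distribution,
`ρ = (α_1'·α_2' − α_1·α_2) / √((α_1'² + 2α_1α_2 + α_2²)·(α_2'² + 2α_1α_2 + α_1²))`,
lies strictly between `−1/3` and `1` for all positive rates. -/
theorem freund_correlation_bounds (α₁ α₂ α₁' α₂' : ℝ)
    (h₁ : 0 < α₁) (h₂ : 0 < α₂) (h₁' : 0 < α₁') (h₂' : 0 < α₂') :
    -1 / 3 < (α₁' * α₂' - α₁ * α₂) /
        Real.sqrt ((α₁' ^ 2 + 2 * α₁ * α₂ + α₂ ^ 2) * (α₂' ^ 2 + 2 * α₁ * α₂ + α₁ ^ 2)) ∧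
      (α₁' * α₂' - α₁ * α₂) /
        Real.sqrt ((α₁' ^ 2 + 2 * α₁ * α₂ + α₂ ^ 2) * (α₂' ^ 2 + 2 * α₁ * α₂ + α₁ ^ 2)) < 1 := by
  set P : ℝ := (α₁' ^ 2 + 2 * α₁ * α₂ + α₂ ^ 2) * (α₂' ^ 2 + 2 * α₁ * α₂ + α₁ ^ 2) with hP
  set s : ℝ := Real.sqrt P with hs
  have hkey : (α₁' * α₂' + 3 * (α₁ * α₂)) ^ 2 ≤ P := by
    rw [hP]
    nlinarith [sq_nonneg (α₁' * α₁ - α₂' * α₂), sq_nonneg (α₁' - α₂'), sq_nonneg (α₁ - α₂),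
      mul_pos h₁ h₂, sq_nonneg (α₁' * α₂' - α₁ * α₂)]
  have hge : α₁' * α₂' + 3 * (α₁ * α₂) ≤ s := by
    rw [hs, show α₁' * α₂' + 3 * (α₁ * α₂) = Real.sqrt ((α₁' * α₂' + 3 * (α₁ * α₂)) ^ 2) from
      (Real.sqrt_sq (by positivity)).symm]
    exact Real.sqrt_le_sqrt hkey
  have hspos : 0 < s := lt_of_lt_of_le (by positivity) hge
  constructor
  · rw [div_lt_div_iff₀ (by norm_num) hspos]
    nlinarith [mul_pos h₁' h₂', mul_pos h₁ h₂]
  · rw [div_lt_one hspos]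
    nlinarith [mul_pos h₁ h₂]
end

section
/- Let M ≥ 1 and R ≥ 1 be integers and let a be a real number with (a − 2·log 2)·R ≥ log 2. Then Σ_{r=R+1}^∞ C(r + M − 1, M − 1)·e^(−a·r) ≤ 2^(M+1)·e^(−(a − 2·log 2)·R), i.e. the tail of the series is at most 2·e^(−((a − 2·log 2)·R − M·log 2)). -/
lemma my_choose_le_two_pow (n k : ℕ) : n.choose k ≤ 2 ^ n := by
  rcases le_or_gt k n with h | h
  · calc n.choose k ≤ ∑ m ∈ Finset.range (n+1), n.choose m :=
        Finset.single_le_sum (fun i _ => Nat.zero_le _) (Finset.mem_range.mpr (Nat.lt_succ_of_le h))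
    _ = 2 ^ n := Nat.sum_range_choose n
  · rw [Nat.choose_eq_zero_of_lt h]; exact Nat.zero_le _

/-- Dyadic-decomposition tail bound: for integers `M, R ≥ 1` and a real `a` with
`(a − 2 log 2)·R ≥ log 2`, the series `Σ_r C(r + M − 1, M − 1)·e^(−a·r)` converges
and its tail over `r ≥ R + 1` is at most
`2^(M+1)·e^(−(a − 2 log 2)·R) = 2·e^(−((a − 2 log 2)·R − M·log 2))`. -/
theorem tail_bound_dyadic (M R : ℕ) (hM : 1 ≤ M) (hR : 1 ≤ R) (a : ℝ)
    (ha : Real.log 2 ≤ (a - 2 * Real.log 2) * R) :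
    Summable (fun r : ℕ => ((r + M - 1).choose (M - 1) : ℝ) * Real.exp (-a * r)) ∧
    ∑' j : ℕ, ((R + 1 + j + M - 1).choose (M - 1) : ℝ) * Real.exp (-a * (R + 1 + j))
      ≤ 2 ^ (M + 1) * Real.exp (-(a - 2 * Real.log 2) * R) := by
  have h2 : (0:ℝ) < Real.log 2 := Real.log_pos one_lt_two
  have hR1 : (1:ℝ) ≤ R := by exact_mod_cast hR
  have hc2 : 0 < a - 2 * Real.log 2 := by nlinarith
  set c := a - Real.log 2 with hcdef
  have hc : Real.log 2 < c := by
    have : Real.log 2 ≤ (a - 2 * Real.log 2) * R := ha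
    nlinarith
  set q := Real.exp (-c) with hqdef
  have hq0 : 0 < q := Real.exp_pos _
  have hqhalf : q ≤ 1/2 := by
    have h := Real.exp_le_exp.mpr (by linarith : -c ≤ -Real.log 2)
    rwa [show Real.exp (-Real.log 2) = 1/2 by
      rw [Real.exp_neg, Real.exp_log (by norm_num : (0:ℝ) < 2)]; norm_num] at h
  have hq1 : q < 1 := by linarith
  -- pointwise key bound
  have key : ∀ r : ℕ, ((r + M - 1).choose (M - 1) : ℝ) * Real.exp (-a * r)
      ≤ 2 ^ (M - 1) * q ^ r := by
    intro r
    have h1 : ((r + M - 1).choose (M - 1) : ℝ) ≤ 2 ^ (r + M - 1) := by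
      exact_mod_cast Nat.cast_le.mpr (my_choose_le_two_pow _ _)
    have hsplit : (2:ℝ) ^ (r + M - 1) = 2 ^ (M - 1) * 2 ^ r := by
      rw [← pow_add]; congr 1; omega
    have hqr : (2:ℝ) ^ r * Real.exp (-a * r) = q ^ r := by
      have h2r : Real.exp (r * Real.log 2) = 2 ^ r := by
        rw [Real.exp_nat_mul, Real.exp_log (by norm_num : (0:ℝ) < 2)]
      rw [hqdef, ← Real.exp_nat_mul, ← h2r, ← Real.exp_add]
      congr 1
      rw [hcdef]; ring
    calc ((r + M - 1).choose (M - 1) : ℝ) * Real.exp (-a * r)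
        ≤ 2 ^ (r + M - 1) * Real.exp (-a * r) := by
          exact mul_le_mul_of_nonneg_right h1 (Real.exp_pos _).le
      _ = 2 ^ (M - 1) * (2 ^ r * Real.exp (-a * r)) := by rw [hsplit]; ring
      _ = 2 ^ (M - 1) * q ^ r := by rw [hqr]
  have hgeo : Summable (fun r : ℕ => (2:ℝ) ^ (M - 1) * q ^ r) :=
    (summable_geometric_of_lt_one hq0.le hq1).mul_left _
  have hnonneg : ∀ r : ℕ, 0 ≤ ((r + M - 1).choose (M - 1) : ℝ) * Real.exp (-a * r) :=
    fun r => mul_nonneg (Nat.cast_nonneg _) (Real.exp_pos _).le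
  have hsum : Summable (fun r : ℕ => ((r + M - 1).choose (M - 1) : ℝ) * Real.exp (-a * r)) :=
    Summable.of_nonneg_of_le hnonneg key hgeo
  refine ⟨hsum, ?_⟩
  -- tail bound
  have htail_eq : ∀ j : ℕ, ((R + 1 + j + M - 1).choose (M - 1) : ℝ) * Real.exp (-a * (R + 1 + j))
      = (((R + 1 + j : ℕ) + M - 1).choose (M - 1) : ℝ) * Real.exp (-a * ((R + 1 + j : ℕ) : ℝ)) := by
    intro j; push_cast; ring_nf
  have htail_le : ∀ j : ℕ, ((R + 1 + j + M - 1).choose (M - 1) : ℝ) * Real.exp (-a * (R + 1 + j))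
      ≤ 2 ^ (M - 1) * q ^ (R + 1) * q ^ j := by
    intro j
    rw [htail_eq j]
    calc _ ≤ (2:ℝ) ^ (M - 1) * q ^ (R + 1 + j) := key (R + 1 + j)
      _ = 2 ^ (M - 1) * q ^ (R + 1) * q ^ j := by rw [pow_add]; ring
  have hgeo2 : Summable (fun j : ℕ => (2:ℝ) ^ (M - 1) * q ^ (R + 1) * q ^ j) :=
    (summable_geometric_of_lt_one hq0.le hq1).mul_left _
  have hsum2 : Summable (fun j : ℕ =>
      ((R + 1 + j + M - 1).choose (M - 1) : ℝ) * Real.exp (-a * (R + 1 + j))) := by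
    refine Summable.of_nonneg_of_le (fun j => ?_) htail_le hgeo2
    exact mul_nonneg (Nat.cast_nonneg _) (Real.exp_pos _).le
  calc ∑' j : ℕ, ((R + 1 + j + M - 1).choose (M - 1) : ℝ) * Real.exp (-a * (R + 1 + j))
      ≤ ∑' j : ℕ, (2:ℝ) ^ (M - 1) * q ^ (R + 1) * q ^ j := Summable.tsum_le_tsum htail_le hsum2 hgeo2
    _ = 2 ^ (M - 1) * q ^ (R + 1) * (1 - q)⁻¹ := by
        rw [tsum_mul_left, tsum_geometric_of_lt_one hq0.le hq1]
    _ ≤ 2 ^ (M - 1) * q ^ (R + 1) * 2 := by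
        have h1q : (1:ℝ) - q ≥ 1/2 := by linarith
        have : (1 - q)⁻¹ ≤ 2 := by
          rw [inv_le_comm₀ (by linarith) (by norm_num)]
          linarith
        exact mul_le_mul_of_nonneg_left this (by positivity)
    _ = 2 ^ M * q ^ (R + 1) := by
        rw [show (2:ℝ) ^ M = 2 ^ (M-1) * 2 by rw [← pow_succ]; congr 1; omega]; ring
    _ ≤ 2 ^ (M + 1) * Real.exp (-(a - 2 * Real.log 2) * R) := by
        have hqe : q ^ (R + 1) = Real.exp (-c * (R + 1)) := by
          rw [hqdef, ← Real.exp_nat_mul]; push_cast; ring_nf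
        rw [hqe]
        have hexp : Real.exp (-c * (R + 1)) ≤ Real.exp (-(a - 2 * Real.log 2) * R) := by
          apply Real.exp_le_exp.mpr
          rw [hcdef]
          nlinarith
        calc (2:ℝ) ^ M * Real.exp (-c * (R + 1))
            ≤ 2 ^ M * Real.exp (-(a - 2 * Real.log 2) * R) := by
              exact mul_le_mul_of_nonneg_left hexp (by positivity)
          _ ≤ 2 ^ (M + 1) * Real.exp (-(a - 2 * Real.log 2) * R) := by
              have : (2:ℝ) ^ M ≤ 2 ^ (M + 1) := by
                apply pow_le_pow_right₀ (by norm_num); omega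
              exact mul_le_mul_of_nonneg_right this (Real.exp_pos _).le
end
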